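/- Let u be a power of 2, let b ≥ 1 be an integer, and let S be a finite set of integers contained in (0, u]. Then (0, u] can be partitioned into a collection of pairwise disjoint dyadic intervals whose union is (0, u], such that each interval in the collection contains at most b elements of S, and the number of intervals in the collection is at most 2·(|S|/b + 1)·(log₂ u + 1). -/
import Mathlib


/-- A dyadic interval, encoded as a pair `(a, ℓ)` representing the integer interval
`(a, a+ℓ]`, where the length `ℓ` is a power of 2 and `a` is divisible by `ℓ`. -/
def IsDyadic (p : ℕ × ℕ) : Prop := (∃ j : ℕ, p.2 = 2 ^ j) ∧ p.2 ∣ p.1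

lemma dyadic_aux (b : ℕ) (hb : 1 ≤ b) : ∀ (j a : ℕ), 2 ^ j ∣ a → ∀ S : Finset ℕ,
    (∀ x ∈ S, x ∈ Finset.Ioc a (a + 2 ^ j)) →
    ∃ 𝒟 : Finset (ℕ × ℕ),
      (∀ p ∈ 𝒟, IsDyadic p) ∧
      (∀ p ∈ 𝒟, ∀ q ∈ 𝒟, p ≠ q →
        Disjoint (Finset.Ioc p.1 (p.1 + p.2)) (Finset.Ioc q.1 (q.1 + q.2))) ∧
      𝒟.biUnion (fun p => Finset.Ioc p.1 (p.1 + p.2)) = Finset.Ioc a (a + 2 ^ j) ∧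
      (∀ p ∈ 𝒟, (S ∩ Finset.Ioc p.1 (p.1 + p.2)).card ≤ b) ∧
      b * 𝒟.card ≤ 2 * S.card * j + b := by
  intro j
  induction j with
  | zero =>
    intro a hdvd S hS
    refine ⟨{(a, 2 ^ 0)}, ?_, ?_, ?_, ?_, ?_⟩
    · intro p hp
      simp only [Finset.mem_singleton] at hp
      exact ⟨⟨0, by simp [hp]⟩, by simp [hp, hdvd]⟩
    · intro p hp q hq hpq
      simp only [Finset.mem_singleton] at hp hq
      exact absurd (hp.trans hq.symm) hpq
    · simp
    · intro p hp
      simp only [Finset.mem_singleton] at hp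
      have hsub : S ⊆ Finset.Ioc a (a + 2 ^ 0) := fun x hx => hS x hx
      have hcard : S.card ≤ 1 := by
        calc S.card ≤ (Finset.Ioc a (a + 2 ^ 0)).card := Finset.card_le_card hsub
        _ = 1 := by simp
      have : S ∩ Finset.Ioc p.1 (p.1 + p.2) ⊆ S := Finset.inter_subset_left
      calc (S ∩ Finset.Ioc p.1 (p.1 + p.2)).card ≤ S.card := Finset.card_le_card this
      _ ≤ 1 := hcard
      _ ≤ b := hb
    · simp
  | succ n ih =>
    intro a hdvd S hS
    by_cases hc : S.card ≤ b
    · -- single interval suffices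
      refine ⟨{(a, 2 ^ (n+1))}, ?_, ?_, ?_, ?_, ?_⟩
      · intro p hp
        simp only [Finset.mem_singleton] at hp
        exact ⟨⟨n+1, by simp [hp]⟩, by simp [hp, hdvd]⟩
      · intro p hp q hq hpq
        simp only [Finset.mem_singleton] at hp hq
        exact absurd (hp.trans hq.symm) hpq
      · simp
      · intro p hp
        simp only [Finset.mem_singleton] at hp
        have : S ∩ Finset.Ioc p.1 (p.1 + p.2) ⊆ S := Finset.inter_subset_left
        exact le_trans (Finset.card_le_card this) hc
      · simp only [Finset.card_singleton, mul_one]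
        omega
    · -- split in two halves
      have key : a + 2 ^ (n + 1) = (a + 2 ^ n) + 2 ^ n := by rw [pow_succ]; ring
      have hdvd1 : 2 ^ n ∣ a := dvd_trans (pow_dvd_pow 2 (Nat.le_succ n)) hdvd
      have hdvd2 : 2 ^ n ∣ a + 2 ^ n := dvd_add hdvd1 dvd_rfl
      set S₁ := S ∩ Finset.Ioc a (a + 2 ^ n) with hS₁def
      set S₂ := S ∩ Finset.Ioc (a + 2 ^ n) (a + 2 ^ n + 2 ^ n) with hS₂def
      obtain ⟨D₁, h1d, h1dis, h1un, h1cnt, h1card⟩ :=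
        ih a hdvd1 S₁ (fun x hx => (Finset.mem_inter.mp hx).2)
      obtain ⟨D₂, h2d, h2dis, h2un, h2cnt, h2card⟩ :=
        ih (a + 2 ^ n) hdvd2 S₂ (fun x hx => (Finset.mem_inter.mp hx).2)
      have hsub1 : ∀ p ∈ D₁, Finset.Ioc p.1 (p.1 + p.2) ⊆ Finset.Ioc a (a + 2 ^ n) := by
        intro p hp
        rw [← h1un]
        exact Finset.subset_biUnion_of_mem (fun p => Finset.Ioc p.1 (p.1 + p.2)) hp
      have hsub2 : ∀ p ∈ D₂,
          Finset.Ioc p.1 (p.1 + p.2) ⊆ Finset.Ioc (a + 2 ^ n) (a + 2 ^ n + 2 ^ n) := by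
        intro p hp
        rw [← h2un]
        exact Finset.subset_biUnion_of_mem (fun p => Finset.Ioc p.1 (p.1 + p.2)) hp
      have hhalf : Disjoint (Finset.Ioc a (a + 2 ^ n))
          (Finset.Ioc (a + 2 ^ n) (a + 2 ^ n + 2 ^ n)) := by
        rw [Finset.disjoint_left]
        intro x hx hx'
        simp only [Finset.mem_Ioc] at hx hx'
        omega
      refine ⟨D₁ ∪ D₂, ?_, ?_, ?_, ?_, ?_⟩
      · intro p hp
        rcases Finset.mem_union.mp hp with h | h
        · exact h1d p h
        · exact h2d p h
      · intro p hp q hq hpq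
        rcases Finset.mem_union.mp hp with h | h <;> rcases Finset.mem_union.mp hq with h' | h'
        · exact h1dis p h q h' hpq
        · exact Disjoint.mono (hsub1 p h) (hsub2 q h') hhalf
        · exact Disjoint.mono (hsub2 p h) (hsub1 q h') hhalf.symm
        · exact h2dis p h q h' hpq
      · have hbu : (D₁ ∪ D₂).biUnion (fun p => Finset.Ioc p.1 (p.1 + p.2)) =
            D₁.biUnion (fun p => Finset.Ioc p.1 (p.1 + p.2)) ∪
            D₂.biUnion (fun p => Finset.Ioc p.1 (p.1 + p.2)) := by
          ext x
          simp only [Finset.mem_biUnion, Finset.mem_union]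
          constructor
          · rintro ⟨a', ha' | ha', hx⟩
            · exact Or.inl ⟨a', ha', hx⟩
            · exact Or.inr ⟨a', ha', hx⟩
          · rintro (⟨a', ha', hx⟩ | ⟨a', ha', hx⟩)
            · exact ⟨a', Or.inl ha', hx⟩
            · exact ⟨a', Or.inr ha', hx⟩
        rw [hbu, h1un, h2un, key]
        rw [Finset.Ioc_union_Ioc_eq_Ioc (by omega) (by omega)]
      · intro p hp
        rcases Finset.mem_union.mp hp with h | h
        · have heq : S ∩ Finset.Ioc p.1 (p.1 + p.2) = S₁ ∩ Finset.Ioc p.1 (p.1 + p.2) := by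
            rw [hS₁def, Finset.inter_assoc,
              Finset.inter_eq_right.mpr (hsub1 p h)]
          rw [heq]; exact h1cnt p h
        · have heq : S ∩ Finset.Ioc p.1 (p.1 + p.2) = S₂ ∩ Finset.Ioc p.1 (p.1 + p.2) := by
            rw [hS₂def, Finset.inter_assoc,
              Finset.inter_eq_right.mpr (hsub2 p h)]
          rw [heq]; exact h2cnt p h
      · have hdisS : Disjoint S₁ S₂ :=
          Disjoint.mono Finset.inter_subset_right Finset.inter_subset_right hhalf
        have hsum : S₁.card + S₂.card ≤ S.card := by
          rw [← Finset.card_union_of_disjoint hdisS]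
          exact Finset.card_le_card (Finset.union_subset Finset.inter_subset_left
            Finset.inter_subset_left)
        have hcardle : (D₁ ∪ D₂).card ≤ D₁.card + D₂.card := Finset.card_union_le _ _
        have h1 : b * (D₁ ∪ D₂).card ≤ b * D₁.card + b * D₂.card := by
          calc b * (D₁ ∪ D₂).card ≤ b * (D₁.card + D₂.card) := Nat.mul_le_mul_left _ hcardle
          _ = b * D₁.card + b * D₂.card := Nat.mul_add _ _ _
        have hbig : b < S.card := Nat.lt_of_not_le hc
        nlinarith [h1card, h2card, hsum, hbig, h1]

theorem stmt_4 (u : ℕ) (hu : ∃ j : ℕ, u = 2 ^ j) (b : ℕ) (hb : 1 ≤ b)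
    (S : Finset ℕ) (hS : ∀ x ∈ S, x ∈ Finset.Ioc 0 u) :
    ∃ 𝒟 : Finset (ℕ × ℕ),
      (∀ p ∈ 𝒟, IsDyadic p) ∧
      (∀ p ∈ 𝒟, ∀ q ∈ 𝒟, p ≠ q →
        Disjoint (Finset.Ioc p.1 (p.1 + p.2)) (Finset.Ioc q.1 (q.1 + q.2))) ∧
      𝒟.biUnion (fun p => Finset.Ioc p.1 (p.1 + p.2)) = Finset.Ioc 0 u ∧
      (∀ p ∈ 𝒟, (S ∩ Finset.Ioc p.1 (p.1 + p.2)).card ≤ b) ∧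
      (𝒟.card : ℝ) ≤ 2 * ((S.card : ℝ) / (b : ℝ) + 1) * (Real.logb 2 (u : ℝ) + 1) := by
  obtain ⟨j, hj⟩ := hu
  have hS' : ∀ x ∈ S, x ∈ Finset.Ioc 0 (0 + 2 ^ j) := by
    intro x hx
    have := hS x hx
    simpa [hj] using this
  obtain ⟨𝒟, hd, hdis, hun, hcnt, hcard⟩ := dyadic_aux b hb j 0 (dvd_zero _) S hS'
  refine ⟨𝒟, hd, hdis, by simpa [hj] using hun, hcnt, ?_⟩
  have hlog : Real.logb 2 (u : ℝ) = j := by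
    rw [hj]
    push_cast
    rw [Real.logb_pow, Real.logb_self_eq_one (by norm_num)]
    ring
  rw [hlog]
  have hbpos : (0 : ℝ) < b := by exact_mod_cast hb
  have hcast : (b : ℝ) * 𝒟.card ≤ 2 * S.card * j + b := by exact_mod_cast hcard
  have hsnn : (0 : ℝ) ≤ (S.card : ℝ) := Nat.cast_nonneg _
  have hjnn : (0 : ℝ) ≤ (j : ℝ) := Nat.cast_nonneg _
  have ht : (S.card : ℝ) / b * b = S.card := div_mul_cancel₀ _ (ne_of_gt hbpos)
  have htnn : (0 : ℝ) ≤ (S.card : ℝ) / b := div_nonneg hsnn hbpos.le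
  nlinarith [hcast, ht, htnn, hjnn, hbpos, mul_nonneg hbpos.le hjnn,
    mul_nonneg htnn hbpos.le, mul_nonneg (mul_nonneg htnn hbpos.le) hjnn]
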